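/- arXiv:1911.10160 — 4 statements merged into one kernel-verified Lean document; each statement's English description precedes it below -/
import Mathlib

section
/- Let N ≥ 1, let Ω ⊆ ℝ³ be open and T > 0, let ρ = (ρ_1,…,ρ_N) : Ω × (0,T) → (0,∞)^N and v : Ω × (0,T) → ℝ³ be differentiable, and let Λ : (0,∞)^N → ℝ be continuously differentiable and positively homogeneous of degree one. If each component satisfies the mass continuity equation ∂_t ρ_i + div(ρ_i v) = 0 pointwise on Ω × (0,T), then w := Λ ∘ ρ satisfies the conservation law ∂_t w + div(w v) = 0 pointwise on Ω × (0,T). -/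
/-- Partial derivative in time of a function of `(x,t) ∈ ℝ³ × ℝ`. -/
noncomputable def ptime (f : ((Fin 3 → ℝ) × ℝ) → ℝ) (z : (Fin 3 → ℝ) × ℝ) : ℝ :=
  fderiv ℝ f z (0, 1)

/-- `k`-th spatial partial derivative of a function of `(x,t) ∈ ℝ³ × ℝ`. -/
noncomputable def pspace (k : Fin 3) (f : ((Fin 3 → ℝ) × ℝ) → ℝ) (z : (Fin 3 → ℝ) × ℝ) : ℝ :=
  fderiv ℝ f z (Pi.single k 1, 0)

/-- Spatial divergence of a vector field of `(x,t) ∈ ℝ³ × ℝ`. -/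
noncomputable def spaceDiv (F : ((Fin 3 → ℝ) × ℝ) → Fin 3 → ℝ) (z : (Fin 3 → ℝ) × ℝ) : ℝ :=
  ∑ k, pspace k (fun p => F p k) z

open Finset

/-!
Since `∂_t f + div (f v) = Df (v, 1) + f div v`, the continuity equations for the `ρ_i` say
`Dρ (v, 1) = -(div v) ρ`. By the chain rule `D(Λ ∘ ρ) (v, 1) = -(div v) DΛ(ρ) ρ`, and Euler's
identity `DΛ(y) y = Λ(y)`, obtained by differentiating `Λ(t y) = t Λ(y)` at `t = 1`, turns this
into `-(div v) Λ(ρ)`.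
-/

theorem isOpen_setOf_forall_pos {ι : Type*} [Finite ι] : IsOpen {y : ι → ℝ | ∀ i, 0 < y i} := by
  simpa only [Set.ofPred_forall] using
    isOpen_iInter_of_finite fun i => isOpen_lt continuous_const (continuous_apply i)

theorem HasFDerivAt.apply_self_eq_of_homogeneous {E F : Type*} [NormedAddCommGroup E]
    [NormedSpace ℝ E] [NormedAddCommGroup F] [NormedSpace ℝ F] {f : E → F} {f' : E →L[ℝ] F}
    {y : E} (hf : HasFDerivAt f f' y) (hhom : ∀ t : ℝ, 0 < t → f (t • y) = t • f y) :
    f' y = f y := by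
  have hray : HasDerivAt (fun t : ℝ => f (t • y)) (f' y) 1 := by
    simpa [Function.comp_def] using
      hf.comp_hasDerivAt_of_eq (1 : ℝ) ((hasDerivAt_id (1 : ℝ)).smul_const y) (by simp)
  have hlin : HasDerivAt (fun t : ℝ => t • f y) (f y) 1 := by
    simpa using (hasDerivAt_id (1 : ℝ)).smul_const (f y)
  have heq : (fun t : ℝ => t • f y) =ᶠ[nhds 1] fun t => f (t • y) := by
    filter_upwards [Ioi_mem_nhds one_pos] with t ht
    exact (hhom t ht).symm
  exact hray.unique (hlin.congr_of_eventuallyEq heq.symm)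

def SatisfiesContinuityEqAt (f : ((Fin 3 → ℝ) × ℝ) → ℝ) (v : ((Fin 3 → ℝ) × ℝ) → Fin 3 → ℝ)
    (z : (Fin 3 → ℝ) × ℝ) : Prop :=
  ptime f z + spaceDiv (fun p k => f p * v p k) z = 0

section

variable {f : ((Fin 3 → ℝ) × ℝ) → ℝ} {v : ((Fin 3 → ℝ) × ℝ) → Fin 3 → ℝ} {z : (Fin 3 → ℝ) × ℝ}

theorem ptime_add_spaceDiv_mul (hf : DifferentiableAt ℝ f z) (hv : DifferentiableAt ℝ v z) :
    ptime f z + spaceDiv (fun p k => f p * v p k) z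
      = fderiv ℝ f z (v z, 1) + f z * spaceDiv v z := by
  have hdir : (v z, (1 : ℝ)) = (0, 1) + ∑ k, v z k • ((Pi.single k 1 : Fin 3 → ℝ), (0 : ℝ)) := by
    ext <;> simp [Prod.fst_sum, Prod.snd_sum, Finset.sum_apply, Pi.single_apply]
  simp only [ptime, spaceDiv, pspace, hdir, map_add, map_sum, map_smul, smul_eq_mul, mul_sum,
    sum_add_distrib, fderiv_fun_mul hf (differentiableAt_pi.1 hv _), add_apply, smul_apply]
  ring

theorem satisfiesContinuityEqAt_iff (hf : DifferentiableAt ℝ f z) (hv : DifferentiableAt ℝ v z) :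
    SatisfiesContinuityEqAt f v z ↔ fderiv ℝ f z (v z, 1) = -(spaceDiv v z * f z) := by
  rw [SatisfiesContinuityEqAt, ptime_add_spaceDiv_mul hf hv]
  constructor <;> intro h <;> linarith

end

theorem SatisfiesContinuityEqAt.comp_of_apply_self_eq {ι : Type*} [Fintype ι]
    {ρ : ((Fin 3 → ℝ) × ℝ) → ι → ℝ} {v : ((Fin 3 → ℝ) × ℝ) → Fin 3 → ℝ}
    {z : (Fin 3 → ℝ) × ℝ} {Λ : (ι → ℝ) → ℝ} (hρ : DifferentiableAt ℝ ρ z)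
    (hv : DifferentiableAt ℝ v z) (hΛ : DifferentiableAt ℝ Λ (ρ z))
    (heuler : fderiv ℝ Λ (ρ z) (ρ z) = Λ (ρ z))
    (h : ∀ i, SatisfiesContinuityEqAt (fun p => ρ p i) v z) :
    SatisfiesContinuityEqAt (fun p => Λ (ρ p)) v z := by
  have hρ_dir : fderiv ℝ ρ z (v z, 1) = -spaceDiv v z • ρ z := by
    funext i
    have hi := (satisfiesContinuityEqAt_iff (differentiableAt_pi.1 hρ i) hv).1 (h i)
    rw [fderiv_apply hρ i] at hi
    simpa using hi
  refine (satisfiesContinuityEqAt_iff (hΛ.comp z hρ) hv).2 ?_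
  calc fderiv ℝ (Λ ∘ ρ) z (v z, 1)
      = fderiv ℝ Λ (ρ z) (fderiv ℝ ρ z (v z, 1)) := by rw [fderiv_comp z hΛ hρ]; rfl
    _ = -(spaceDiv v z * Λ (ρ z)) := by
        rw [hρ_dir, map_smul, heuler, smul_eq_mul, neg_mul]

theorem volume_extension_conservation_general
    (N : ℕ)
    (Ω : Set (Fin 3 → ℝ)) (T : ℝ)
    (S : Set (Fin N → ℝ)) (hS : S = {y | ∀ i, 0 < y i})
    (ρ : ((Fin 3 → ℝ) × ℝ) → Fin N → ℝ)
    (v : ((Fin 3 → ℝ) × ℝ) → Fin 3 → ℝ)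
    (hρdiff : ∀ z : (Fin 3 → ℝ) × ℝ, z.1 ∈ Ω → z.2 ∈ Set.Ioo 0 T → DifferentiableAt ℝ ρ z)
    (hvdiff : ∀ z : (Fin 3 → ℝ) × ℝ, z.1 ∈ Ω → z.2 ∈ Set.Ioo 0 T → DifferentiableAt ℝ v z)
    (hρS : ∀ z : (Fin 3 → ℝ) × ℝ, z.1 ∈ Ω → z.2 ∈ Set.Ioo 0 T → ρ z ∈ S)
    (Λ : (Fin N → ℝ) → ℝ)
    (hΛ : ContDiffOn ℝ 1 Λ S)
    (hhom : ∀ t : ℝ, 0 < t → ∀ y ∈ S, Λ (t • y) = t * Λ y)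
    (hpde : ∀ (i : Fin N) (z : (Fin 3 → ℝ) × ℝ), z.1 ∈ Ω → z.2 ∈ Set.Ioo 0 T →
      ptime (fun p => ρ p i) z + spaceDiv (fun p k => ρ p i * v p k) z = 0) :
    ∀ z : (Fin 3 → ℝ) × ℝ, z.1 ∈ Ω → z.2 ∈ Set.Ioo 0 T →
      ptime (fun p => Λ (ρ p)) z + spaceDiv (fun p k => Λ (ρ p) * v p k) z = 0 := by
  intro z hzΩ hzT
  have hρz : ρ z ∈ S := hρS z hzΩ hzT
  have hS_open : IsOpen S := hS ▸ isOpen_setOf_forall_pos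
  have hΛz : HasFDerivAt Λ (fderiv ℝ Λ (ρ z)) (ρ z) :=
    ((hΛ.contDiffAt (hS_open.mem_nhds hρz)).differentiableAt one_ne_zero).hasFDerivAt
  exact SatisfiesContinuityEqAt.comp_of_apply_self_eq (hρdiff z hzΩ hzT) (hvdiff z hzΩ hzT)
    hΛz.differentiableAt (hΛz.apply_self_eq_of_homogeneous fun t ht => hhom t ht _ hρz)
    fun i => hpde i z hzΩ hzT

/-- If each `ρ_i` satisfies the mass continuity equation `∂_t ρ_i + div(ρ_i v) = 0` on
`Ω × (0,T)`, and `Λ` is C¹ and positively 1-homogeneous on the positive orthant, then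
`w = Λ ∘ ρ` satisfies the conservation law `∂_t w + div(w v) = 0`. -/
theorem volume_extension_conservation
    (N : ℕ) (hN : 1 ≤ N)
    (Ω : Set (Fin 3 → ℝ)) (hΩ : IsOpen Ω) (T : ℝ) (hT : 0 < T)
    (S : Set (Fin N → ℝ)) (hS : S = {y | ∀ i, 0 < y i})
    (ρ : ((Fin 3 → ℝ) × ℝ) → Fin N → ℝ)
    (v : ((Fin 3 → ℝ) × ℝ) → Fin 3 → ℝ)
    (hρdiff : ∀ z : (Fin 3 → ℝ) × ℝ, z.1 ∈ Ω → z.2 ∈ Set.Ioo 0 T → DifferentiableAt ℝ ρ z)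
    (hvdiff : ∀ z : (Fin 3 → ℝ) × ℝ, z.1 ∈ Ω → z.2 ∈ Set.Ioo 0 T → DifferentiableAt ℝ v z)
    (hρS : ∀ z : (Fin 3 → ℝ) × ℝ, z.1 ∈ Ω → z.2 ∈ Set.Ioo 0 T → ρ z ∈ S)
    (Λ : (Fin N → ℝ) → ℝ)
    (hΛ : ContDiffOn ℝ 1 Λ S)
    (hhom : ∀ t : ℝ, 0 < t → ∀ y ∈ S, Λ (t • y) = t * Λ y)
    (hpde : ∀ (i : Fin N) (z : (Fin 3 → ℝ) × ℝ), z.1 ∈ Ω → z.2 ∈ Set.Ioo 0 T →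
      ptime (fun p => ρ p i) z + spaceDiv (fun p k => ρ p i * v p k) z = 0) :
    ∀ z : (Fin 3 → ℝ) × ℝ, z.1 ∈ Ω → z.2 ∈ Set.Ioo 0 T →
      ptime (fun p => Λ (ρ p)) z + spaceDiv (fun p k => Λ (ρ p) * v p k) z = 0 :=
  volume_extension_conservation_general N Ω T S hS ρ v hρdiff hvdiff hρS Λ hΛ hhom hpde
end

section
/- Let N ≥ 1, let Ω ⊆ ℝ³ be open and T > 0, let Λ : (0,∞)^N → ℝ be twice continuously differentiable, positive, and positively homogeneous of degree one, let G : (0,∞) → ℝ be continuously differentiable, let κ > 0, and let ρ : Ω × (0,T) → (0,∞)^N be twice differentiable. Suppose each component satisfies ∂_t ρ_i + div(ρ_i v) = 0 pointwise on Ω × (0,T), where the velocity is given by Darcy's law v = −κ ∇(G(Λ(ρ))), with ∇ the spatial gradient. Then the volume extension w := Λ ∘ ρ satisfies the porous-medium-type equation ∂_t w − div(κ w G'(w) ∇w) = 0 pointwise on Ω × (0,T). -/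
open Topology Set

section Calculus

variable {E : Type*} [NormedAddCommGroup E] [NormedSpace ℝ E]

theorem fderiv_apply_self_of_homogeneous {Λ : E → ℝ} {y : E} (hΛ : DifferentiableAt ℝ Λ y)
    (hhom : ∀ t : ℝ, 0 < t → Λ (t • y) = t * Λ y) : fderiv ℝ Λ y y = Λ y := by
  have hray : HasDerivAt (fun t : ℝ => Λ (t • y)) (fderiv ℝ Λ y y) 1 := by
    have hsmul : HasDerivAt (fun t : ℝ => t • y) y 1 := by
      simpa using (hasDerivAt_id (1 : ℝ)).smul_const y
    exact hΛ.hasFDerivAt.comp_hasDerivAt_of_eq 1 hsmul (one_smul ℝ y).symm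
  have hlin : HasDerivAt (fun t : ℝ => Λ (t • y)) (Λ y) 1 := by
    refine ((hasDerivAt_id (1 : ℝ)).mul_const (Λ y)).congr_of_eventuallyEq ?_ |>.congr_deriv
      (one_mul _)
    filter_upwards [Ioi_mem_nhds one_pos] with t ht
    exact hhom t ht
  exact hray.unique hlin

theorem differentiableAt_mul_iff_of_ne_zero {𝕜 F : Type*} [NontriviallyNormedField 𝕜]
    [NormedAddCommGroup F] [NormedSpace 𝕜 F] {g f : F → 𝕜} {z : F}
    (hg : DifferentiableAt 𝕜 g z) (hgz : g z ≠ 0) :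
    DifferentiableAt 𝕜 (fun p => g p * f p) z ↔ DifferentiableAt 𝕜 f z := by
  refine ⟨fun hgf => ?_, hg.mul⟩
  have hquot : (fun p => g p * f p * (g p)⁻¹) =ᶠ[𝓝 z] f := by
    filter_upwards [hg.continuousAt.eventually_ne hgz] with p hp
    field_simp
  exact (hgf.mul (hg.inv hgz)).congr_of_eventuallyEq hquot.symm

/-- When `f` is not differentiable, the non-vanishing of `ρ` and `Λ(ρ)` makes every product
non-differentiable too, so both sides are junk zeros. -/
theorem fderiv_apply_fderiv_mul_eq_fderiv_comp_mul {ι : Type*} [Fintype ι]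
    {Λ : (ι → ℝ) → ℝ} {ρ : E → ι → ℝ} {f : E → ℝ} {z : E}
    (hΛ : DifferentiableAt ℝ Λ (ρ z)) (heuler : fderiv ℝ Λ (ρ z) (ρ z) = Λ (ρ z))
    (hρ : DifferentiableAt ℝ ρ z) (hρz : ∀ i, ρ z i ≠ 0) (hΛz : Λ (ρ z) ≠ 0) (u : E) :
    fderiv ℝ Λ (ρ z) (fun i => fderiv ℝ (fun p => ρ p i * f p) z u)
      = fderiv ℝ (fun p => Λ (ρ p) * f p) z u := by
  have hρi : ∀ i, DifferentiableAt ℝ (fun p => ρ p i) z := differentiableAt_pi.1 hρ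
  have hw : DifferentiableAt ℝ (fun p => Λ (ρ p)) z := hΛ.comp z hρ
  by_cases hf : DifferentiableAt ℝ f z
  · have hcomponents : (fun i => fderiv ℝ (fun p => ρ p i * f p) z u)
        = fderiv ℝ f z u • ρ z + f z • fderiv ℝ ρ z u := by
      funext i
      simp [fderiv_fun_mul (hρi i) hf, fderiv_apply hρ i, mul_comm]
    rw [hcomponents, map_add, map_smul, map_smul, heuler, fderiv_fun_mul hw hf,
      fderiv_fun_comp z hΛ hρ]
    simp [mul_comm]
  · have hcomponents : (fun i => fderiv ℝ (fun p => ρ p i * f p) z u) = 0 := by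
      funext i
      rw [fderiv_zero_of_not_differentiableAt
        ((differentiableAt_mul_iff_of_ne_zero (hρi i) (hρz i)).not.2 hf)]
      rfl
    rw [hcomponents, map_zero, fderiv_zero_of_not_differentiableAt
      ((differentiableAt_mul_iff_of_ne_zero hw hΛz).not.2 hf)]
    rfl

end Calculus

section SpaceTime

variable {N : ℕ} {z : (Fin 3 → ℝ) × ℝ}

theorem ptime_comp {Λ : (Fin N → ℝ) → ℝ} {ρ : (Fin 3 → ℝ) × ℝ → Fin N → ℝ}
    (hΛ : DifferentiableAt ℝ Λ (ρ z)) (hρ : DifferentiableAt ℝ ρ z) :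
    ptime (fun p => Λ (ρ p)) z = fderiv ℝ Λ (ρ z) (fun i => ptime (fun p => ρ p i) z) := by
  simp only [ptime, fderiv_fun_comp z hΛ hρ, fderiv_apply hρ]
  rfl

theorem pspace_comp {G : ℝ → ℝ} {f : (Fin 3 → ℝ) × ℝ → ℝ} (k : Fin 3)
    (hG : DifferentiableAt ℝ G (f z)) (hf : DifferentiableAt ℝ f z) :
    pspace k (fun p => G (f p)) z = deriv G (f z) * pspace k f z := by
  have hGf := hG.hasDerivAt.comp_hasFDerivAt z hf.hasFDerivAt
  rw [pspace, show (fun p => G (f p)) = G ∘ f from rfl, hGf.fderiv]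
  rfl

theorem ptime_comp_add_spaceDiv_comp_mul_eq_zero {Λ : (Fin N → ℝ) → ℝ}
    {ρ : (Fin 3 → ℝ) × ℝ → Fin N → ℝ} {v : (Fin 3 → ℝ) × ℝ → Fin 3 → ℝ}
    (hΛ : DifferentiableAt ℝ Λ (ρ z)) (heuler : fderiv ℝ Λ (ρ z) (ρ z) = Λ (ρ z))
    (hρ : DifferentiableAt ℝ ρ z) (hρz : ∀ i, ρ z i ≠ 0) (hΛz : Λ (ρ z) ≠ 0)
    (hcont : ∀ i, ptime (fun p => ρ p i) z + spaceDiv (fun p k => ρ p i * v p k) z = 0) :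
    ptime (fun p => Λ (ρ p)) z + spaceDiv (fun p k => Λ (ρ p) * v p k) z = 0 := by
  have hρt : (fun i => ptime (fun p => ρ p i) z)
      = -∑ k, fun i => pspace k (fun p => ρ p i * v p k) z := by
    funext i
    simp [eq_neg_of_add_eq_zero_left (hcont i), spaceDiv, Finset.sum_apply]
  rw [ptime_comp hΛ hρ, hρt, map_neg, map_sum, spaceDiv, neg_add_eq_zero]
  congr! 2 with k
  exact fderiv_apply_fderiv_mul_eq_fderiv_comp_mul hΛ heuler hρ hρz hΛz _

theorem spaceDiv_congr {F F' : (Fin 3 → ℝ) × ℝ → Fin 3 → ℝ} (h : F =ᶠ[𝓝 z] F') :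
    spaceDiv F z = spaceDiv F' z := by
  unfold spaceDiv pspace
  congr! 2 with k
  exact (h.fun_comp (· k)).fderiv_eq

theorem spaceDiv_neg (F : (Fin 3 → ℝ) × ℝ → Fin 3 → ℝ) :
    spaceDiv (fun p k => -F p k) z = -spaceDiv F z := by
  simp [spaceDiv, pspace, fderiv_fun_neg]

end SpaceTime

theorem porous_medium_equation_for_volume_extension_general
    (N : ℕ)
    (Ω : Set (Fin 3 → ℝ)) (hΩ : IsOpen Ω) (T : ℝ)
    (S : Set (Fin N → ℝ)) (hS : S = {y | ∀ i, 0 < y i})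
    (Λ : (Fin N → ℝ) → ℝ)
    (hΛ : ContDiffOn ℝ 2 Λ S)
    (hΛpos : ∀ y ∈ S, 0 < Λ y)
    (hhom : ∀ t : ℝ, 0 < t → ∀ y ∈ S, Λ (t • y) = t * Λ y)
    (G : ℝ → ℝ) (hG : ContDiffOn ℝ 1 G (Set.Ioi 0))
    (κ : ℝ)
    (ρ : ((Fin 3 → ℝ) × ℝ) → Fin N → ℝ)
    (hρdiff : ∀ z : (Fin 3 → ℝ) × ℝ, z.1 ∈ Ω → z.2 ∈ Set.Ioo 0 T → DifferentiableAt ℝ ρ z)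
    (hρS : ∀ z : (Fin 3 → ℝ) × ℝ, z.1 ∈ Ω → z.2 ∈ Set.Ioo 0 T → ρ z ∈ S)
    (v : ((Fin 3 → ℝ) × ℝ) → Fin 3 → ℝ)
    (hv : ∀ (z : (Fin 3 → ℝ) × ℝ) (k : Fin 3),
      v z k = -κ * pspace k (fun p => G (Λ (ρ p))) z)
    (hpde : ∀ (i : Fin N) (z : (Fin 3 → ℝ) × ℝ), z.1 ∈ Ω → z.2 ∈ Set.Ioo 0 T →
      ptime (fun p => ρ p i) z + spaceDiv (fun p k => ρ p i * v p k) z = 0) :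
    ∀ z : (Fin 3 → ℝ) × ℝ, z.1 ∈ Ω → z.2 ∈ Set.Ioo 0 T →
      ptime (fun p => Λ (ρ p)) z -
        spaceDiv (fun p k =>
          κ * Λ (ρ p) * deriv G (Λ (ρ p)) * pspace k (fun q => Λ (ρ q)) p) z = 0 := by
  subst hS
  intro z hz₁ hz₂
  have hSopen : IsOpen {y : Fin N → ℝ | ∀ i, 0 < y i} := by
    simpa [Set.pi] using isOpen_set_pi finite_univ fun (_ : Fin N) _ => isOpen_Ioi (a := (0 : ℝ))
  have hΛd {y : Fin N → ℝ} (hy : ∀ i, 0 < y i) : DifferentiableAt ℝ Λ y :=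
    (hΛ.differentiableOn two_ne_zero).differentiableAt (hSopen.mem_nhds hy)
  have hGd {s : ℝ} (hs : 0 < s) : DifferentiableAt ℝ G s :=
    (hG.differentiableOn one_ne_zero).differentiableAt (Ioi_mem_nhds hs)
  have hρz := hρS z hz₁ hz₂
  have hflux : (fun p k => κ * Λ (ρ p) * deriv G (Λ (ρ p)) * pspace k (fun q => Λ (ρ q)) p)
      =ᶠ[𝓝 z] fun p k => -(Λ (ρ p) * v p k) := by
    filter_upwards [(hΩ.prod isOpen_Ioo).mem_nhds ⟨hz₁, hz₂⟩] with p ⟨hp₁, hp₂⟩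
    funext k
    have hρp := hρS p hp₁ hp₂
    rw [hv, pspace_comp (f := fun q => Λ (ρ q)) k (hGd (hΛpos _ hρp))
      ((hΛd hρp).comp p (hρdiff p hp₁ hp₂))]
    ring
  rw [spaceDiv_congr hflux, spaceDiv_neg, sub_neg_eq_add]
  exact ptime_comp_add_spaceDiv_comp_mul_eq_zero (hΛd hρz)
    (fderiv_apply_self_of_homogeneous (hΛd hρz) fun t ht => hhom t ht _ hρz)
    (hρdiff z hz₁ hz₂) (fun i => (hρz i).ne') (hΛpos _ hρz).ne' fun i => hpde i z hz₁ hz₂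

/-- If each `ρ_i` satisfies `∂_t ρ_i + div(ρ_i v) = 0` with the Darcy velocity
`v = −κ ∇(G(Λ(ρ)))`, where `Λ` is positive, C², positively 1-homogeneous and `G` is C¹,
then `w = Λ ∘ ρ` satisfies the porous-medium-type equation
`∂_t w − div(κ w G'(w) ∇w) = 0` on `Ω × (0,T)`. -/
theorem porous_medium_equation_for_volume_extension
    (N : ℕ) (hN : 1 ≤ N)
    (Ω : Set (Fin 3 → ℝ)) (hΩ : IsOpen Ω) (T : ℝ) (hT : 0 < T)
    (S : Set (Fin N → ℝ)) (hS : S = {y | ∀ i, 0 < y i})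
    (Λ : (Fin N → ℝ) → ℝ)
    (hΛ : ContDiffOn ℝ 2 Λ S)
    (hΛpos : ∀ y ∈ S, 0 < Λ y)
    (hhom : ∀ t : ℝ, 0 < t → ∀ y ∈ S, Λ (t • y) = t * Λ y)
    (G : ℝ → ℝ) (hG : ContDiffOn ℝ 1 G (Set.Ioi 0))
    (κ : ℝ) (hκ : 0 < κ)
    (ρ : ((Fin 3 → ℝ) × ℝ) → Fin N → ℝ)
    (hρdiff : ∀ z : (Fin 3 → ℝ) × ℝ, z.1 ∈ Ω → z.2 ∈ Set.Ioo 0 T → DifferentiableAt ℝ ρ z)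
    (hρdiff2 : ∀ z : (Fin 3 → ℝ) × ℝ, z.1 ∈ Ω → z.2 ∈ Set.Ioo 0 T →
      DifferentiableAt ℝ (fderiv ℝ ρ) z)
    (hρS : ∀ z : (Fin 3 → ℝ) × ℝ, z.1 ∈ Ω → z.2 ∈ Set.Ioo 0 T → ρ z ∈ S)
    (v : ((Fin 3 → ℝ) × ℝ) → Fin 3 → ℝ)
    (hv : ∀ (z : (Fin 3 → ℝ) × ℝ) (k : Fin 3),
      v z k = -κ * pspace k (fun p => G (Λ (ρ p))) z)
    (hpde : ∀ (i : Fin N) (z : (Fin 3 → ℝ) × ℝ), z.1 ∈ Ω → z.2 ∈ Set.Ioo 0 T →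
      ptime (fun p => ρ p i) z + spaceDiv (fun p k => ρ p i * v p k) z = 0) :
    ∀ z : (Fin 3 → ℝ) × ℝ, z.1 ∈ Ω → z.2 ∈ Set.Ioo 0 T →
      ptime (fun p => Λ (ρ p)) z -
        spaceDiv (fun p k =>
          κ * Λ (ρ p) * deriv G (Λ (ρ p)) * pspace k (fun q => Λ (ρ q)) p) z = 0 :=
  porous_medium_equation_for_volume_extension_general N Ω hΩ T S hS Λ hΛ hΛpos hhom G hG κ ρ hρdiff
    hρS v hv hpde
end

section
/- Let N ≥ 1, let Ω ⊆ ℝ³ be open and T > 0, let ρ = (ρ_1,…,ρ_N) : Ω × (0,T) → (0,∞)^N and v : Ω × (0,T) → ℝ³ be differentiable, and let Λ : (0,∞)^N → ℝ be continuously differentiable, positive, and positively homogeneous of degree one. If each component satisfies ∂_t ρ_i + div(ρ_i v) = 0 pointwise on Ω × (0,T), then each modified fraction u_i := ρ_i / Λ(ρ) satisfies the transport equation ∂_t u_i + v·∇u_i = 0 pointwise on Ω × (0,T), for i = 1,…,N. -/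
/-- If each `ρ_i` satisfies `∂_t ρ_i + div(ρ_i v) = 0` on `Ω × (0,T)` and `Λ` is C¹,
positive and positively 1-homogeneous on the positive orthant, then each modified
fraction `u_i = ρ_i / Λ(ρ)` satisfies the transport equation `∂_t u_i + v·∇u_i = 0`. -/
theorem fractions_transport_equation
    (N : ℕ) (hN : 1 ≤ N)
    (Ω : Set (Fin 3 → ℝ)) (hΩ : IsOpen Ω) (T : ℝ) (hT : 0 < T)
    (S : Set (Fin N → ℝ)) (hS : S = {y | ∀ i, 0 < y i})
    (ρ : ((Fin 3 → ℝ) × ℝ) → Fin N → ℝ)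
    (v : ((Fin 3 → ℝ) × ℝ) → Fin 3 → ℝ)
    (hρdiff : ∀ z : (Fin 3 → ℝ) × ℝ, z.1 ∈ Ω → z.2 ∈ Set.Ioo 0 T → DifferentiableAt ℝ ρ z)
    (hvdiff : ∀ z : (Fin 3 → ℝ) × ℝ, z.1 ∈ Ω → z.2 ∈ Set.Ioo 0 T → DifferentiableAt ℝ v z)
    (hρS : ∀ z : (Fin 3 → ℝ) × ℝ, z.1 ∈ Ω → z.2 ∈ Set.Ioo 0 T → ρ z ∈ S)
    (Λ : (Fin N → ℝ) → ℝ)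
    (hΛ : ContDiffOn ℝ 1 Λ S)
    (hΛpos : ∀ y ∈ S, 0 < Λ y)
    (hhom : ∀ t : ℝ, 0 < t → ∀ y ∈ S, Λ (t • y) = t * Λ y)
    (hpde : ∀ (i : Fin N) (z : (Fin 3 → ℝ) × ℝ), z.1 ∈ Ω → z.2 ∈ Set.Ioo 0 T →
      ptime (fun p => ρ p i) z + spaceDiv (fun p k => ρ p i * v p k) z = 0) :
    ∀ (i : Fin N) (z : (Fin 3 → ℝ) × ℝ), z.1 ∈ Ω → z.2 ∈ Set.Ioo 0 T →
      ptime (fun p => ρ p i / Λ (ρ p)) z +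
        ∑ k, v z k * pspace k (fun p => ρ p i / Λ (ρ p)) z = 0 := by
  intro i z hz1 hz2
  -- S is open
  have hSopen : IsOpen S := by
    rw [hS]
    have h : {y : Fin N → ℝ | ∀ j, 0 < y j} = ⋂ j, {y : Fin N → ℝ | 0 < y j} := by
      ext x; simp [Set.mem_iInter]
    rw [h]
    exact isOpen_iInter_of_finite fun j =>
      isOpen_lt continuous_const (continuous_apply j)
  have hyS : ρ z ∈ S := hρS z hz1 hz2
  have hΛy : 0 < Λ (ρ z) := hΛpos _ hyS
  have hΛne : Λ (ρ z) ≠ 0 := ne_of_gt hΛy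
  -- Λ is differentiable at ρ z
  have hΛd : DifferentiableAt ℝ Λ (ρ z) :=
    (hΛ.contDiffAt (hSopen.mem_nhds hyS)).differentiableAt one_ne_zero
  set M := fderiv ℝ Λ (ρ z) with hM
  -- Euler's identity: M (ρ z) = Λ (ρ z)
  have euler : M (ρ z) = Λ (ρ z) := by
    have hsmul : HasDerivAt (fun t : ℝ => t • ρ z) (ρ z) 1 := by
      simpa using (hasDerivAt_id (1 : ℝ)).smul_const (ρ z)
    have hl : HasFDerivAt Λ M ((fun t : ℝ => t • ρ z) 1) := by
      simpa using hΛd.hasFDerivAt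
    have h1 : HasDerivAt (fun t : ℝ => Λ (t • ρ z)) (M (ρ z)) 1 := by
      have := hl.comp_hasDerivAt 1 hsmul
      exact this
    have h2 : HasDerivAt (fun t : ℝ => t * Λ (ρ z)) (Λ (ρ z)) 1 := by
      simpa using (hasDerivAt_id (1 : ℝ)).mul_const (Λ (ρ z))
    have heq : (fun t : ℝ => t * Λ (ρ z)) =ᶠ[nhds 1] fun t : ℝ => Λ (t • ρ z) := by
      filter_upwards [Ioi_mem_nhds (zero_lt_one)] with t ht
      exact (hhom t ht (ρ z) hyS).symm
    exact h1.unique (h2.congr_of_eventuallyEq heq.symm)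
  -- derivatives of ρ and v
  have hρd := hρdiff z hz1 hz2
  have hvd := hvdiff z hz1 hz2
  set L := fderiv ℝ ρ z with hL
  set Lv := fderiv ℝ v z with hLv
  have hcomp : ∀ j : Fin N, HasFDerivAt (fun p => ρ p j)
      ((ContinuousLinearMap.proj j).comp L) z := by
    intro j
    have := (ContinuousLinearMap.proj j :
        (Fin N → ℝ) →L[ℝ] ℝ).hasFDerivAt.comp z hρd.hasFDerivAt
    exact this
  have hvcomp : ∀ k : Fin 3, HasFDerivAt (fun p => v p k)
      ((ContinuousLinearMap.proj k).comp Lv) z := by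
    intro k
    have := (ContinuousLinearMap.proj k :
        (Fin 3 → ℝ) →L[ℝ] ℝ).hasFDerivAt.comp z hvd.hasFDerivAt
    exact this
  have hΛρ : HasFDerivAt (fun p => Λ (ρ p)) (M.comp L) z := by
    have := hΛd.hasFDerivAt.comp z hρd.hasFDerivAt
    exact this
  -- directions
  set et : (Fin 3 → ℝ) × ℝ := ((0 : Fin 3 → ℝ), (1 : ℝ)) with het
  set ek : Fin 3 → (Fin 3 → ℝ) × ℝ := fun k => (Pi.single k 1, (0 : ℝ)) with hek
  -- rewrite the PDE in terms of L and Lv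
  have hpde' : ∀ j : Fin N,
      L et j + ∑ k, (ρ z j * Lv (ek k) k + v z k * L (ek k) j) = 0 := by
    intro j
    have h := hpde j z hz1 hz2
    unfold ptime spaceDiv pspace at h
    rw [(hcomp j).fderiv] at h
    have hrw : ∀ k : Fin 3, fderiv ℝ (fun p => ρ p j * v p k) z (Pi.single k 1, 0)
        = ρ z j * Lv (ek k) k + v z k * L (ek k) j := by
      intro k
      rw [((hcomp j).fun_mul (hvcomp k)).fderiv]
      simp [hek, ContinuousLinearMap.add_apply, ContinuousLinearMap.smul_apply,
        ContinuousLinearMap.comp_apply, ContinuousLinearMap.proj_apply, smul_eq_mul]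
    simp only [hrw] at h
    simpa [het, ContinuousLinearMap.comp_apply, ContinuousLinearMap.proj_apply] using h
  set divv : ℝ := ∑ k, Lv (ek k) k with hdivv
  have key : ∀ j : Fin N, L et j + ∑ k, v z k * L (ek k) j = -(ρ z j * divv) := by
    intro j
    have h := hpde' j
    rw [Finset.sum_add_distrib, ← Finset.mul_sum] at h
    rw [hdivv]
    linarith
  -- the vector identity
  have hvec : (L et + ∑ k, v z k • L (ek k)) = (-divv) • ρ z := by
    funext j
    have h := key j
    simp only [Pi.add_apply, Finset.sum_apply, Pi.smul_apply, smul_eq_mul, Pi.neg_apply]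
    rw [h]; ring
  have hMa : M (L et) + ∑ k, v z k * M (L (ek k)) = -(divv * Λ (ρ z)) := by
    have h := congrArg M hvec
    rw [map_add, map_sum] at h
    simp only [map_smul, smul_eq_mul, euler] at h
    linarith
  -- derivative of the quotient
  have hinv : HasFDerivAt (fun p => (Λ (ρ p))⁻¹)
      ((ContinuousLinearMap.smulRight (1 : ℝ →L[ℝ] ℝ) (-(Λ (ρ z) ^ 2)⁻¹)).comp (M.comp L)) z := by
    have := (hasFDerivAt_inv hΛne).comp z hΛρ
    exact this
  have hfun : (fun p => ρ p i / Λ (ρ p)) = fun p => ρ p i * (Λ (ρ p))⁻¹ := by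
    funext p; rw [div_eq_mul_inv]
  have hu : HasFDerivAt (fun p => ρ p i * (Λ (ρ p))⁻¹)
      (ρ z i • ((ContinuousLinearMap.smulRight (1 : ℝ →L[ℝ] ℝ)
          (-(Λ (ρ z) ^ 2)⁻¹)).comp (M.comp L))
        + (Λ (ρ z))⁻¹ • ((ContinuousLinearMap.proj i).comp L)) z :=
    (hcomp i).mul hinv
  have expand : ∀ w : (Fin 3 → ℝ) × ℝ,
      fderiv ℝ (fun p => ρ p i / Λ (ρ p)) z w
        = (1 / Λ (ρ z) ^ 2) * (Λ (ρ z) * L w i - ρ z i * M (L w)) := by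
    intro w
    rw [hfun, hu.fderiv]
    simp only [ContinuousLinearMap.add_apply, ContinuousLinearMap.smul_apply,
      ContinuousLinearMap.comp_apply, ContinuousLinearMap.proj_apply,
      ContinuousLinearMap.smulRight_apply, ContinuousLinearMap.one_apply, smul_eq_mul]
    field_simp
    ring
  unfold ptime pspace
  have hgoal1 : fderiv ℝ (fun p => ρ p i / Λ (ρ p)) z (0, 1)
      = (1 / Λ (ρ z) ^ 2) * (Λ (ρ z) * L et i - ρ z i * M (L et)) := expand et
  have hgoal2 : ∀ k : Fin 3, fderiv ℝ (fun p => ρ p i / Λ (ρ p)) z (Pi.single k 1, 0)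
      = (1 / Λ (ρ z) ^ 2) * (Λ (ρ z) * L (ek k) i - ρ z i * M (L (ek k))) :=
    fun k => expand (ek k)
  rw [hgoal1]
  simp only [hgoal2]
  have h1 := key i
  have h2 := hMa
  simp only [Fin.sum_univ_three] at h1 h2 ⊢
  field_simp
  linear_combination (Λ (ρ z)) * h1 - (ρ z i) * h2
end

section
/- Let N ≥ 1, let Ω ⊆ ℝ³ be open and T > 0, let Λ : (0,∞)^N → ℝ be continuously differentiable, positive, and positively homogeneous of degree one, let r : (0,∞)^N → ℝ^N be continuous, and let ρ : Ω × (0,T) → (0,∞)^N and v : Ω × (0,T) → ℝ³ be differentiable. Suppose each component satisfies ∂_t ρ_i + div(ρ_i v) = r_i(ρ) pointwise on Ω × (0,T). Then, with w := Λ(ρ), u := ρ/Λ(ρ), f(w,u) := Σ_{j=1}^N r_j(w u) ∂Λ/∂ρ_j(u), and g_i(w,u) := (1/w)·(r_i(w u) − u_i f(w,u)), each fraction u_i satisfies the transport equation with source ∂_t u_i + v·∇u_i = g_i(w,u) pointwise on Ω × (0,T), for i = 1,…,N. -/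
/-- If each `ρ_i` satisfies the mass balance with reaction `∂_t ρ_i + div(ρ_i v) = r_i(ρ)`
on `Ω × (0,T)`, then each fraction `u_i = ρ_i/Λ(ρ)` satisfies the transport equation with
source `∂_t u_i + v·∇u_i = g_i(w,u)`, where `w = Λ(ρ)`,
`f(w,u) = Σ_j r_j(w u) ∂Λ/∂ρ_j(u)` and `g_i(w,u) = (1/w)(r_i(w u) − u_i f(w,u))`. -/
theorem fractions_transport_with_reaction
    (N : ℕ) (hN : 1 ≤ N)
    (Ω : Set (Fin 3 → ℝ)) (hΩ : IsOpen Ω) (T : ℝ) (hT : 0 < T)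
    (S : Set (Fin N → ℝ)) (hS : S = {y | ∀ i, 0 < y i})
    (Λ : (Fin N → ℝ) → ℝ)
    (hΛ : ContDiffOn ℝ 1 Λ S)
    (hΛpos : ∀ y ∈ S, 0 < Λ y)
    (hhom : ∀ t : ℝ, 0 < t → ∀ y ∈ S, Λ (t • y) = t * Λ y)
    (r : (Fin N → ℝ) → Fin N → ℝ) (hr : ContinuousOn r S)
    (ρ : ((Fin 3 → ℝ) × ℝ) → Fin N → ℝ)
    (v : ((Fin 3 → ℝ) × ℝ) → Fin 3 → ℝ)
    (hρdiff : ∀ z : (Fin 3 → ℝ) × ℝ, z.1 ∈ Ω → z.2 ∈ Set.Ioo 0 T → DifferentiableAt ℝ ρ z)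
    (hvdiff : ∀ z : (Fin 3 → ℝ) × ℝ, z.1 ∈ Ω → z.2 ∈ Set.Ioo 0 T → DifferentiableAt ℝ v z)
    (hρS : ∀ z : (Fin 3 → ℝ) × ℝ, z.1 ∈ Ω → z.2 ∈ Set.Ioo 0 T → ρ z ∈ S)
    (hpde : ∀ (i : Fin N) (z : (Fin 3 → ℝ) × ℝ), z.1 ∈ Ω → z.2 ∈ Set.Ioo 0 T →
      ptime (fun p => ρ p i) z + spaceDiv (fun p k => ρ p i * v p k) z = r (ρ z) i)
    (w : ((Fin 3 → ℝ) × ℝ) → ℝ) (hw : ∀ z, w z = Λ (ρ z))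
    (u : ((Fin 3 → ℝ) × ℝ) → Fin N → ℝ) (hu : ∀ z, u z = (Λ (ρ z))⁻¹ • ρ z)
    (f : ℝ → (Fin N → ℝ) → ℝ)
    (hf : ∀ (a : ℝ) (b : Fin N → ℝ),
      f a b = ∑ j, r (a • b) j * fderiv ℝ Λ b (Pi.single j 1))
    (g : Fin N → ℝ → (Fin N → ℝ) → ℝ)
    (hg : ∀ (i : Fin N) (a : ℝ) (b : Fin N → ℝ),
      g i a b = (1 / a) * (r (a • b) i - b i * f a b)) :
    ∀ (i : Fin N) (z : (Fin 3 → ℝ) × ℝ), z.1 ∈ Ω → z.2 ∈ Set.Ioo 0 T →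
      ptime (fun p => u p i) z + ∑ k, v z k * pspace k (fun p => u p i) z
        = g i (w z) (u z) := by
  -- S is open
  have hSopen : IsOpen S := by
    rw [hS]
    have h : {y : Fin N → ℝ | ∀ i, 0 < y i} = ⋂ i, {y : Fin N → ℝ | 0 < y i} := by
      ext y; simp [Set.mem_iInter]
    rw [h]
    exact isOpen_iInter_of_finite fun i =>
      isOpen_lt continuous_const (continuous_apply i)
  have hdiffΛ : ∀ y ∈ S, DifferentiableAt ℝ Λ y := fun y hy =>
    (hΛ.contDiffAt (hSopen.mem_nhds hy)).differentiableAt one_ne_zero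
  -- Euler identity
  have euler : ∀ y ∈ S, fderiv ℝ Λ y y = Λ y := by
    intro y hy
    have h1 : HasDerivAt (fun t : ℝ => Λ (t • y)) (fderiv ℝ Λ y y) 1 := by
      have hs : HasDerivAt (fun t : ℝ => t • y) y 1 := by
        simpa using (hasDerivAt_id (1 : ℝ)).smul_const y
      have hΛy : HasFDerivAt Λ (fderiv ℝ Λ y) ((1 : ℝ) • y) := by
        simpa using (hdiffΛ y hy).hasFDerivAt
      exact hΛy.comp_hasDerivAt 1 hs
    have h2 : HasDerivAt (fun t : ℝ => Λ (t • y)) (Λ y) 1 := by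
      have hb : HasDerivAt (fun t : ℝ => t * Λ y) (Λ y) 1 := by
        simpa using (hasDerivAt_id (1 : ℝ)).mul_const (Λ y)
      apply hb.congr_of_eventuallyEq
      filter_upwards [Ioi_mem_nhds (show (0:ℝ) < 1 by norm_num)] with t ht
      exact hhom t ht y hy
    exact h1.unique h2
  -- degree-zero homogeneity of the gradient
  have gradhom : ∀ y ∈ S, ∀ c : ℝ, 0 < c →
      fderiv ℝ Λ (c • y) = fderiv ℝ Λ y := by
    intro y hy c hc
    have hcy : c • y ∈ S := by
      rw [hS] at hy ⊢
      intro j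
      have := mul_pos hc (hy j)
      simpa using this
    have h1 : HasFDerivAt (fun x : Fin N → ℝ => Λ (c • x))
        (c • fderiv ℝ Λ (c • y)) y := by
      have hsm : HasFDerivAt (fun x : Fin N → ℝ => c • x)
          (c • ContinuousLinearMap.id ℝ (Fin N → ℝ)) y := by
        simpa using (c • ContinuousLinearMap.id ℝ (Fin N → ℝ)).hasFDerivAt (x := y)
      have hcomp := ((hdiffΛ _ hcy).hasFDerivAt).comp y hsm
      refine hcomp.congr_fderiv (ContinuousLinearMap.ext fun x => ?_)
      simp
    have h2 : HasFDerivAt (fun x : Fin N → ℝ => Λ (c • x))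
        (c • fderiv ℝ Λ y) y := by
      have hb : HasFDerivAt (fun x : Fin N → ℝ => c * Λ x) (c • fderiv ℝ Λ y) y :=
        (hdiffΛ y hy).hasFDerivAt.const_mul c
      apply hb.congr_of_eventuallyEq
      filter_upwards [hSopen.mem_nhds hy] with x hx
      exact hhom c hc x hx
    have h3 := h1.unique h2
    ext x
    have h4 := congrArg (fun T : (Fin N → ℝ) →L[ℝ] ℝ => T x) h3
    simp only [ContinuousLinearMap.smul_apply, smul_eq_mul] at h4
    exact mul_left_cancel₀ hc.ne' h4
  have hwfun : w = fun p => Λ (ρ p) := funext hw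
  subst hwfun
  have hufun : u = fun p => (Λ (ρ p))⁻¹ • ρ p := funext hu
  subst hufun
  intro i z hz1 hz2
  have hyS : ρ z ∈ S := hρS z hz1 hz2
  have hWpos : 0 < Λ (ρ z) := hΛpos _ hyS
  have hWne : Λ (ρ z) ≠ 0 := hWpos.ne'
  have hρd := hρdiff z hz1 hz2
  have hvd := hvdiff z hz1 hz2
  set L := fderiv ℝ ρ z with hLdef
  set V := fderiv ℝ v z with hVdef
  set G := fderiv ℝ Λ (ρ z) with hGdef
  have hL : HasFDerivAt ρ L z := hρd.hasFDerivAt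
  have hV : HasFDerivAt v V z := hvd.hasFDerivAt
  have hGf : HasFDerivAt Λ G (ρ z) := (hdiffΛ _ hyS).hasFDerivAt
  have hWd : HasFDerivAt (fun p => Λ (ρ p)) (G.comp L) z := hGf.comp z hL
  have hcomp : ∀ j : Fin N, HasFDerivAt (fun p => ρ p j)
      ((ContinuousLinearMap.proj j).comp L) z := fun j =>
    (ContinuousLinearMap.proj j : (Fin N → ℝ) →L[ℝ] ℝ).hasFDerivAt.comp z hL
  have hvcomp : ∀ k : Fin 3, HasFDerivAt (fun p => v p k)
      ((ContinuousLinearMap.proj k).comp V) z := fun k =>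
    (ContinuousLinearMap.proj k : (Fin 3 → ℝ) →L[ℝ] ℝ).hasFDerivAt.comp z hV
  set dv : ℝ := ∑ k, V ((Pi.single k 1 : Fin 3 → ℝ), (0 : ℝ)) k with hdvdef
  -- material derivative of each component of ρ
  have hmat : ∀ j : Fin N,
      L ((0 : Fin 3 → ℝ), (1 : ℝ)) j
        + ∑ k, v z k * L ((Pi.single k 1 : Fin 3 → ℝ), (0 : ℝ)) j
      = r (ρ z) j - ρ z j * dv := by
    intro j
    have hp := hpde j z hz1 hz2
    have h1 : ptime (fun p => ρ p j) z = L ((0 : Fin 3 → ℝ), (1 : ℝ)) j := by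
      rw [ptime, (hcomp j).fderiv]
      simp
    have h2 : ∀ k, pspace k (fun p => ρ p j * v p k) z
        = ρ z j * V ((Pi.single k 1 : Fin 3 → ℝ), (0 : ℝ)) k
          + v z k * L ((Pi.single k 1 : Fin 3 → ℝ), (0 : ℝ)) j := by
      intro k
      have hm := (hcomp j).mul (hvcomp k)
      rw [pspace, (show HasFDerivAt (fun p => ρ p j * v p k) _ z from hm).fderiv]
      simp
    rw [h1] at hp
    simp only [spaceDiv, h2] at hp
    rw [Finset.sum_add_distrib, ← Finset.mul_sum, ← hdvdef] at hp
    linarith [hp]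
  -- expansion of G on coordinates
  have hGr : ∀ x : Fin N → ℝ, G x = ∑ j, x j * G (Pi.single j 1) := by
    intro x
    have hx : x = ∑ j, x j • (Pi.single j 1 : Fin N → ℝ) := by
      funext j
      simp [Finset.sum_apply, Pi.single_apply]
    conv_lhs => rw [hx]
    rw [map_sum]
    simp
  -- material derivative of w = Λ ∘ ρ
  have hGsum : G (L ((0 : Fin 3 → ℝ), (1 : ℝ)))
      + ∑ k, v z k * G (L ((Pi.single k 1 : Fin 3 → ℝ), (0 : ℝ)))
      = G (r (ρ z)) - dv * Λ (ρ z) := by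
    have hlin : G (L ((0 : Fin 3 → ℝ), (1 : ℝ)))
        + ∑ k, v z k * G (L ((Pi.single k 1 : Fin 3 → ℝ), (0 : ℝ)))
        = G (L ((0 : Fin 3 → ℝ), (1 : ℝ))
            + ∑ k, v z k • L ((Pi.single k 1 : Fin 3 → ℝ), (0 : ℝ))) := by
      rw [map_add, map_sum]
      simp
    rw [hlin]
    have hmvec : L ((0 : Fin 3 → ℝ), (1 : ℝ))
        + ∑ k, v z k • L ((Pi.single k 1 : Fin 3 → ℝ), (0 : ℝ))
        = r (ρ z) - dv • ρ z := by
      funext j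
      have := hmat j
      simp only [Pi.add_apply, Pi.sub_apply, Pi.smul_apply, Finset.sum_apply,
        smul_eq_mul]
      rw [this]
      ring
    rw [hmvec, map_sub, map_smul]
    have hE : G (ρ z) = Λ (ρ z) := by rw [hGdef]; exact euler _ hyS
    rw [hE]
    simp [smul_eq_mul]
  -- derivative of u_i = (Λ ∘ ρ)⁻¹ * ρ_i
  have hinv : HasFDerivAt (fun p => (Λ (ρ p))⁻¹)
      ((ContinuousLinearMap.smulRight (1 : ℝ →L[ℝ] ℝ)
        (-(Λ (ρ z) ^ 2)⁻¹)).comp (G.comp L)) z := by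
    have h := (hasFDerivAt_inv hWne).comp z hWd
    exact h.congr_fderiv (ContinuousLinearMap.ext fun e => by simp)
  have hU := hinv.mul (hcomp i)
  have hUeval : ∀ e : (Fin 3 → ℝ) × ℝ,
      fderiv ℝ (fun p => (Λ (ρ p))⁻¹ * ρ p i) z e
      = (Λ (ρ z))⁻¹ * L e i - ρ z i * (Λ (ρ z) ^ 2)⁻¹ * G (L e) := by
    intro e
    rw [(show HasFDerivAt (fun p => (Λ (ρ p))⁻¹ * ρ p i) _ z from hU).fderiv]
    simp only [ContinuousLinearMap.add_apply, ContinuousLinearMap.smul_apply,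
      ContinuousLinearMap.comp_apply, ContinuousLinearMap.proj_apply,
      ContinuousLinearMap.smulRight_apply, ContinuousLinearMap.one_apply,
      smul_eq_mul]
    ring
  have harg : Λ (ρ z) • ((Λ (ρ z))⁻¹ • ρ z) = ρ z := by
    rw [smul_smul, mul_inv_cancel₀ hWne, one_smul]
  have hfval : f (Λ (ρ z)) ((Λ (ρ z))⁻¹ • ρ z) = G (r (ρ z)) := by
    rw [hf, harg]
    have hgr : fderiv ℝ Λ ((Λ (ρ z))⁻¹ • ρ z) = G := by
      rw [hGdef]
      exact gradhom (ρ z) hyS (Λ (ρ z))⁻¹ (inv_pos.mpr hWpos)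
    rw [hgr, ← hGr]
  have hLHS : ptime (fun p => (Λ (ρ p))⁻¹ * ρ p i) z
      + ∑ k, v z k * pspace k (fun p => (Λ (ρ p))⁻¹ * ρ p i) z
      = (Λ (ρ z))⁻¹ * (r (ρ z) i - ρ z i * dv)
        - ρ z i * (Λ (ρ z) ^ 2)⁻¹ * (G (r (ρ z)) - dv * Λ (ρ z)) := by
    simp only [ptime, pspace, hUeval]
    have hsplit : ∑ k, v z k * ((Λ (ρ z))⁻¹ * L ((Pi.single k 1 : Fin 3 → ℝ), (0:ℝ)) i
        - ρ z i * (Λ (ρ z) ^ 2)⁻¹ * G (L ((Pi.single k 1 : Fin 3 → ℝ), (0:ℝ))))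
      = (Λ (ρ z))⁻¹ * (∑ k, v z k * L ((Pi.single k 1 : Fin 3 → ℝ), (0:ℝ)) i)
        - ρ z i * (Λ (ρ z) ^ 2)⁻¹
          * (∑ k, v z k * G (L ((Pi.single k 1 : Fin 3 → ℝ), (0:ℝ)))) := by
      rw [Finset.mul_sum, Finset.mul_sum, ← Finset.sum_sub_distrib]
      exact Finset.sum_congr rfl fun k _ => by ring
    rw [hsplit]
    linear_combination (Λ (ρ z))⁻¹ * hmat i
      - ρ z i * (Λ (ρ z) ^ 2)⁻¹ * hGsum
  simp only [Pi.smul_apply, smul_eq_mul]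
  rw [hLHS, hg, harg, hfval]
  have hui : ((Λ (ρ z))⁻¹ • ρ z) i = (Λ (ρ z))⁻¹ * ρ z i := by simp
  rw [hui]
  field_simp
  ring
end
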